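/- Let S be a commutative ring, F a formal group law over S, n ≥ 2, and 1 ≤ i ≤ n−1. Then the following two sequences of R-modules are short exact: (i) 0 → R → A → R → 0, where the first map is r ↦ (r ⊗ 1)·ξ and the second is the twisted multiplication μ_s; i.e. r ↦ (r⊗1)·ξ is injective, μ_s is surjective, and the image of the first map equals the kernel of μ_s; (ii) 0 → R → A → R → 0, where the first map is r ↦ (r ⊗ 1)·ξ' and the second is the multiplication μ. -/

import Mathlib

/- Common setup: substitution of multivariate power series, formal group laws,
formal inverses, and the variable–swapping operation. -/

open MvPowerSeries Finsupp

noncomputable section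

variable {S : Type*} [CommRing S]

/-- Substitution of a family of multivariate power series (each intended to have zero
constant coefficient) into a power series in `k` variables.  When every `a j` has zero
constant coefficient, the coefficient of a monomial `m` of the substituted series only
receives contributions from exponents `d` with `d j ≤ deg m`, so the finite sum below
computes the genuine substitution. -/
noncomputable def msubst {k n : ℕ} (a : Fin k → MvPowerSeries (Fin n) S)
    (F : MvPowerSeries (Fin k) S) : MvPowerSeries (Fin n) S :=
  fun m =>
    ∑ d ∈ Finset.Iic (equivFunOnFinite.symm fun _ : Fin k => m.sum fun _ e => e),
      MvPowerSeries.coeff d F * MvPowerSeries.coeff m (∏ j, a j ^ d j)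

/-- `F ∈ S[[x,y]]` is a (one-dimensional, commutative) formal group law over `S`:
zero constant coefficient, commutativity `F(x,y) = F(y,x)`, unitality `F(x,0) = x`,
and associativity `F(F(x,y),z) = F(x,F(y,z))`. -/
def IsFormalGroupLaw (F : MvPowerSeries (Fin 2) S) : Prop :=
  MvPowerSeries.constantCoeff (σ := Fin 2) (R := S) F = 0 ∧
  msubst ![(X 1 : MvPowerSeries (Fin 2) S), X 0] F = F ∧
  msubst ![(X 0 : MvPowerSeries (Fin 2) S), 0] F = X 0 ∧
  msubst ![msubst ![(X 0 : MvPowerSeries (Fin 3) S), X 1] F, X 2] F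
    = msubst ![(X 0 : MvPowerSeries (Fin 3) S), msubst ![(X 1 : MvPowerSeries (Fin 3) S), X 2] F] F

/-- `ι ∈ S[[x]]` is the formal inverse of `F`: it has zero constant coefficient
and `F(x, ι(x)) = 0`. -/
def IsFormalInverse (F : MvPowerSeries (Fin 2) S) (ι : MvPowerSeries (Fin 1) S) : Prop :=
  MvPowerSeries.constantCoeff (σ := Fin 1) (R := S) ι = 0 ∧
  msubst ![(X 0 : MvPowerSeries (Fin 1) S), ι] F = 0

/-- `ι(b)`, the substitution of `b` into the formal inverse `ι`. -/
noncomputable def fneg (ι : MvPowerSeries (Fin 1) S) {n : ℕ}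
    (b : MvPowerSeries (Fin n) S) : MvPowerSeries (Fin n) S :=
  msubst ![b] ι

/-- `a −_F b := F(a, ι(b))`. -/
noncomputable def fsub (F : MvPowerSeries (Fin 2) S) (ι : MvPowerSeries (Fin 1) S) {n : ℕ}
    (a b : MvPowerSeries (Fin n) S) : MvPowerSeries (Fin n) S :=
  msubst ![a, fneg ι b] F

/-- Substitution `g(a,b)` of two power series into a two-variable power series `g`. -/
noncomputable def gsub (g : MvPowerSeries (Fin 2) S) {n : ℕ}
    (a b : MvPowerSeries (Fin n) S) : MvPowerSeries (Fin n) S :=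
  msubst ![a, b] g

/-- The map on multivariate power series interchanging the variables `x_i` and `x_j`
(the renaming along the transposition `(i,j)`). -/
def swapVars {n : ℕ} (i j : Fin n) (f : MvPowerSeries (Fin n) S) :
    MvPowerSeries (Fin n) S :=
  fun m => f (equivMapDomain (Equiv.swap i j) m)

theorem swapVars_coeff {n : ℕ} (i j : Fin n) (f : MvPowerSeries (Fin n) S) (m : Fin n →₀ ℕ) :
    MvPowerSeries.coeff m (swapVars i j f)
      = MvPowerSeries.coeff (equivMapDomain (Equiv.swap i j) m) f := rfl

theorem equivMapDomain_swap_invol {n : ℕ} (i j : Fin n) (m : Fin n →₀ ℕ) :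
    equivMapDomain (Equiv.swap i j) (equivMapDomain (Equiv.swap i j) m) = m := by
  rw [← equivMapDomain_trans, Equiv.swap_swap, equivMapDomain_refl]

theorem equivMapDomain_add' {n : ℕ} (e : Fin n ≃ Fin n) (a b : Fin n →₀ ℕ) :
    equivMapDomain e (a + b) = equivMapDomain e a + equivMapDomain e b := by
  ext x; simp [equivMapDomain_apply]

theorem swapVars_add {n : ℕ} (i j : Fin n) (f h : MvPowerSeries (Fin n) S) :
    swapVars i j (f + h) = swapVars i j f + swapVars i j h := rfl

theorem swapVars_mul {n : ℕ} (i j : Fin n) (f h : MvPowerSeries (Fin n) S) :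
    swapVars i j (f * h) = swapVars i j f * swapVars i j h := by
  ext m
  rw [swapVars_coeff, MvPowerSeries.coeff_mul, MvPowerSeries.coeff_mul]
  refine Finset.sum_nbij'
    (fun p => (equivMapDomain (Equiv.swap i j) p.1, equivMapDomain (Equiv.swap i j) p.2))
    (fun p => (equivMapDomain (Equiv.swap i j) p.1, equivMapDomain (Equiv.swap i j) p.2))
    ?_ ?_ ?_ ?_ ?_
  · intro p hp
    rw [Finset.HasAntidiagonal.mem_antidiagonal] at hp ⊢
    rw [← equivMapDomain_add', hp, equivMapDomain_swap_invol]
  · intro p hp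
    rw [Finset.HasAntidiagonal.mem_antidiagonal] at hp ⊢
    rw [← equivMapDomain_add', hp]
  · intro p _; simp [equivMapDomain_swap_invol]
  · intro p _; simp [equivMapDomain_swap_invol]
  · intro p _
    rw [swapVars_coeff, swapVars_coeff, equivMapDomain_swap_invol, equivMapDomain_swap_invol]

theorem swapVars_C {n : ℕ} (i j : Fin n) (s : S) :
    swapVars i j (MvPowerSeries.C (σ := Fin n) (R := S) s) = MvPowerSeries.C (σ := Fin n) (R := S) s := by
  ext m
  rw [swapVars_coeff, MvPowerSeries.coeff_C, MvPowerSeries.coeff_C]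
  by_cases hm : m = 0
  · subst hm; rw [equivMapDomain_zero]
  · rw [if_neg, if_neg hm]
    intro hc
    apply hm
    have := congrArg (equivMapDomain (Equiv.swap i j)) hc
    rwa [equivMapDomain_swap_invol, equivMapDomain_zero] at this

theorem swapVars_one {n : ℕ} (i j : Fin n) :
    swapVars i j (1 : MvPowerSeries (Fin n) S) = 1 := by
  have := swapVars_C (S := S) i j 1
  rwa [map_one] at this

/-- The fixed subalgebra `R^{s_i}` of power series invariant under interchanging
the variables `x_i` and `x_j`. -/
noncomputable def fixedSubalgebra (S : Type*) [CommRing S] {n : ℕ} (i j : Fin n) :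
    Subalgebra S (MvPowerSeries (Fin n) S) where
  carrier := {f | swapVars i j f = f}
  mul_mem' := by
    intro a b ha hb
    simp only [Set.mem_setOf_eq] at *
    rw [swapVars_mul, ha, hb]
  add_mem' := by
    intro a b ha hb
    simp only [Set.mem_setOf_eq] at *
    rw [swapVars_add, ha, hb]
  algebraMap_mem' := fun s => swapVars_C i j s

/-- `s_i` as an algebra homomorphism over the fixed subalgebra. -/
noncomputable def swapAlgHom (S : Type*) [CommRing S] {n : ℕ} (i j : Fin n) :
    MvPowerSeries (Fin n) S →ₐ[fixedSubalgebra S i j] MvPowerSeries (Fin n) S where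
  toFun := swapVars i j
  map_one' := swapVars_one i j
  map_mul' := swapVars_mul i j
  map_zero' := rfl
  map_add' := swapVars_add i j
  commutes' := fun r => r.2

open TensorProduct in
/-- The elementary Bott–Samelson bimodule `A = R ⊗_{R^{s_i}} R`. -/
noncomputable abbrev BSB (S : Type*) [CommRing S] {n : ℕ} (i j : Fin n) : Type _ :=
  (MvPowerSeries (Fin n) S) ⊗[fixedSubalgebra S i j] (MvPowerSeries (Fin n) S)

/-- The multiplication map `μ : A → R`, `r1 ⊗ r2 ↦ r1·r2`. -/
noncomputable def mulHom (S : Type*) [CommRing S] {n : ℕ} (i j : Fin n) :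
    BSB S i j →ₐ[fixedSubalgebra S i j] MvPowerSeries (Fin n) S :=
  Algebra.TensorProduct.productMap (AlgHom.id _ _) (AlgHom.id _ _)

/-- The twisted multiplication map `μ_s : A → R`, `r1 ⊗ r2 ↦ r1·s_i(r2)`. -/
noncomputable def mulsHom (S : Type*) [CommRing S] {n : ℕ} (i j : Fin n) :
    BSB S i j →ₐ[fixedSubalgebra S i j] MvPowerSeries (Fin n) S :=
  Algebra.TensorProduct.productMap (AlgHom.id _ _) (swapAlgHom S i j)

open TensorProduct in
/-- The element `ξ = x_i⊗1 −_F 1⊗x_{i+1} := (g(x_i,x_j)⁻¹ ⊗ 1)·(1 ⊗ x_i − x_j ⊗ 1)` of `A`. -/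
noncomputable def xiElt (g : MvPowerSeries (Fin 2) S) {n : ℕ} (i j : Fin n) : BSB S i j :=
  (Ring.inverse (gsub g (X i) (X j)) ⊗ₜ[fixedSubalgebra S i j] (1 : MvPowerSeries (Fin n) S)) *
    ((1 : MvPowerSeries (Fin n) S) ⊗ₜ[fixedSubalgebra S i j] (X i)
      - (X j) ⊗ₜ[fixedSubalgebra S i j] (1 : MvPowerSeries (Fin n) S))

open TensorProduct in
/-- The element `ξ' = x_{i+1}⊗1 −_F 1⊗x_{i+1} := (g(x_j,x_i)⁻¹ ⊗ 1)·(1 ⊗ x_i − x_i ⊗ 1)` of `A`. -/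
noncomputable def xiElt' (g : MvPowerSeries (Fin 2) S) {n : ℕ} (i j : Fin n) : BSB S i j :=
  (Ring.inverse (gsub g (X j) (X i)) ⊗ₜ[fixedSubalgebra S i j] (1 : MvPowerSeries (Fin n) S)) *
    ((1 : MvPowerSeries (Fin n) S) ⊗ₜ[fixedSubalgebra S i j] (X i)
      - (X i) ⊗ₜ[fixedSubalgebra S i j] (1 : MvPowerSeries (Fin n) S))

open TensorProduct

/-!
Write `x = x_i`, `x' = x_{i+1}`. The Demazure operator `∂ f = (f - s_i f)/(x - x')` exists
because `x - x'` divides `f - s_i f`, and is `R^{s_i}`-linear because `x - x'` is a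
non-zero-divisor. As `∂ 1 = 0`, `∂ x = 1` and `f = (f - ∂f · x) + ∂f · x` with `f - ∂f · x`
and `∂f` both `s_i`-invariant, `R` is free over `R^{s_i}` on `1, x`: every element of `A` is
`f ⊗ 1 + h ⊗ x`, and `r ⊗ t ↦ r · ∂t` reads off `h`.
Let `μ` be `μ_s` or `μ` and `y = μ (1 ⊗ x)` (`x'` for `μ_s`, `x` for `μ`), so that the
element `ξ` resp. `ξ'` is `(u ⊗ 1)(1 ⊗ x - y ⊗ 1)` with `u` a unit. Then
`μ (f ⊗ 1 + h ⊗ x) = f + h y`, so the kernel of `μ` is `{h ⊗ x - h y ⊗ 1} = {(h u⁻¹ ⊗ 1) ξ}`,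
and `r ⊗ t ↦ r · ∂t` sends `(r ⊗ 1) ξ` to `r u`, which proves injectivity.
-/

section TwoGenerated

variable {B R : Type*} [CommSemiring B] [CommRing R] [Algebra B R]

theorem TensorProduct.exists_eq_tmul_one_add_tmul {x : R}
    (hspan : ∀ t : R, ∃ t₀ t₁ : B, t = algebraMap B R t₀ + algebraMap B R t₁ * x)
    (a : R ⊗[B] R) : ∃ f h : R, a = f ⊗ₜ 1 + h ⊗ₜ x := by
  induction a using TensorProduct.induction_on with
  | zero => exact ⟨0, 0, by simp⟩
  | tmul r t =>
    obtain ⟨t₀, t₁, rfl⟩ := hspan t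
    refine ⟨t₀ • r, t₁ • r, ?_⟩
    rw [← _root_.Algebra.smul_def t₁ x, Algebra.algebraMap_eq_smul_one t₀, tmul_add, tmul_smul,
      tmul_smul, smul_tmul', smul_tmul']
  | add a a' ha ha' =>
    obtain ⟨f, h, rfl⟩ := ha
    obtain ⟨f', h', rfl⟩ := ha'
    exact ⟨f + f', h + h', by rw [add_tmul, add_tmul]; abel⟩

theorem tmul_one_mul_tmul_one_mul_sub (r u x y : R) :
    (r ⊗ₜ[B] (1 : R)) * ((u ⊗ₜ 1) * (1 ⊗ₜ x - y ⊗ₜ 1)) = (r * u) ⊗ₜ x - (r * u * y) ⊗ₜ 1 := by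
  simp only [mul_sub, ← mul_assoc, Algebra.TensorProduct.tmul_mul_tmul, mul_one, one_mul]

variable {x u : R}

theorem injective_tmul_one_mul_of_dual (d : R →ₗ[B] R) (hd1 : d 1 = 0) (hdx : d x = 1)
    (hu : IsUnit u) (y : R) :
    Function.Injective fun r : R => (r ⊗ₜ[B] (1 : R)) * ((u ⊗ₜ 1) * (1 ⊗ₜ x - y ⊗ₜ 1)) := by
  have hφ : ∀ r : R, LinearMap.mul' B R
      (LinearMap.lTensor R d ((r ⊗ₜ 1) * ((u ⊗ₜ 1) * (1 ⊗ₜ x - y ⊗ₜ 1)))) = r * u := by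
    intro r
    simp [tmul_one_mul_tmul_one_mul_sub, hd1, hdx]
  intro r r' h
  exact hu.mul_right_cancel (by rw [← hφ r, ← hφ r']; exact congrArg _ (congrArg _ h))

theorem range_tmul_one_mul_eq_ker
    (hspan : ∀ t : R, ∃ t₀ t₁ : B, t = algebraMap B R t₀ + algebraMap B R t₁ * x)
    {M : Type*} [FunLike M (R ⊗[B] R) R] [RingHomClass M (R ⊗[B] R) R]
    (μ : M) (hμ : ∀ r, μ (r ⊗ₜ 1) = r) {y : R} (hy : μ (1 ⊗ₜ x) = y)
    (hu : IsUnit u) :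
    Set.range (fun r : R => (r ⊗ₜ[B] (1 : R)) * ((u ⊗ₜ 1) * (1 ⊗ₜ x - y ⊗ₜ 1)))
      = {a | μ a = 0} := by
  have hμx : ∀ h, μ (h ⊗ₜ x) = h * y := fun h => calc
    μ (h ⊗ₜ x) = μ ((h ⊗ₜ 1) * (1 ⊗ₜ x)) := by
      rw [Algebra.TensorProduct.tmul_mul_tmul, mul_one, one_mul]
    _ = h * y := by rw [map_mul, hμ, hy]
  ext a
  simp only [Set.mem_range, Set.mem_ofPred_eq, tmul_one_mul_tmul_one_mul_sub]
  constructor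
  · rintro ⟨r, rfl⟩
    rw [map_sub, hμ, hμx, sub_self]
  · intro ha
    obtain ⟨f, h, rfl⟩ := TensorProduct.exists_eq_tmul_one_add_tmul hspan a
    rw [map_add, hμ, hμx] at ha
    obtain ⟨w, rfl⟩ := hu
    refine ⟨h * ↑w⁻¹, ?_⟩
    rw [Units.inv_mul_cancel_right, eq_neg_of_add_eq_zero_left ha, neg_tmul]
    abel

theorem shortExact_tmul_one_mul_of_dual
    (hspan : ∀ t : R, ∃ t₀ t₁ : B, t = algebraMap B R t₀ + algebraMap B R t₁ * x)
    (d : R →ₗ[B] R) (hd1 : d 1 = 0) (hdx : d x = 1)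
    {M : Type*} [FunLike M (R ⊗[B] R) R] [RingHomClass M (R ⊗[B] R) R]
    (μ : M) (hμ : ∀ r, μ (r ⊗ₜ 1) = r) {y : R} (hy : μ (1 ⊗ₜ x) = y)
    (hu : IsUnit u) :
    Function.Injective (fun r : R => (r ⊗ₜ[B] (1 : R)) * ((u ⊗ₜ 1) * (1 ⊗ₜ x - y ⊗ₜ 1))) ∧
      Function.Surjective μ ∧
      Set.range (fun r : R => (r ⊗ₜ[B] (1 : R)) * ((u ⊗ₜ 1) * (1 ⊗ₜ x - y ⊗ₜ 1)))
        = {a | μ a = 0} :=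
  ⟨injective_tmul_one_mul_of_dual d hd1 hdx hu y, fun r => ⟨r ⊗ₜ 1, hμ r⟩,
    range_tmul_one_mul_eq_ker hspan μ hμ hy hu⟩

end TwoGenerated

theorem MvPowerSeries.isLeftRegular_X_sub_X {σ : Type*} {i j : σ} (hij : i ≠ j) :
    IsLeftRegular (X i - X j : MvPowerSeries σ S) := by
  classical
  refine isLeftRegular_of_non_zero_divisor _ fun h hh => ?_
  have hX : X i * h = X j * h := sub_eq_zero.mp (by rw [← sub_mul, hh])
  have hcoeff : ∀ (k : σ) (p : σ →₀ ℕ), coeff (single k 1 + p) (X k * h) = coeff p h :=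
    fun k p => by rw [X_def, coeff_add_monomial_mul, one_mul]
  have hbase : ∀ p : σ →₀ ℕ, p j = 0 → coeff p h = 0 := fun p hp => by
    rw [← hcoeff i p, hX, X_def, coeff_monomial_mul, if_neg]
    simp [single_le_iff, hp, single_eq_of_ne' hij]
  have hshift : ∀ p : σ →₀ ℕ, coeff (single j 1 + p) h = coeff (single i 1 + p) h := fun p => by
    rw [← hcoeff i, hX, add_left_comm, hcoeff j]
  ext p
  rw [map_zero]
  induction hk : p j generalizing p with
  | zero => exact hbase p hk
  | succ k ih =>
    obtain ⟨q, rfl⟩ : ∃ q, p = single j 1 + q :=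
      ⟨p - single j 1, (add_tsub_cancel_of_le (by simp [single_le_iff, hk])).symm⟩
    rw [hshift]
    apply ih
    simp only [coe_add, Pi.add_apply, single_eq_same, single_eq_of_ne' hij] at hk ⊢
    omega

theorem swapVars_eq_rename {n : ℕ} (i j : Fin n) (f : MvPowerSeries (Fin n) S) :
    swapVars i j f = rename (Equiv.swap i j) f := by
  ext m
  rw [swapVars_coeff]
  convert (coeff_embDomain_rename (Equiv.swap i j).toEmbedding f
    (equivMapDomain (Equiv.swap i j) m)).symm using 2
  · rw [embDomain_eq_mapDomain, Equiv.coe_toEmbedding, ← equivMapDomain_eq_mapDomain,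
    equivMapDomain_swap_invol]
  · rfl

theorem swapVars_X {n : ℕ} (i j k : Fin n) :
    swapVars i j (X k : MvPowerSeries (Fin n) S) = X (Equiv.swap i j k) := by
  rw [swapVars_eq_rename, rename_X]

theorem swapVars_swapVars {n : ℕ} (i j : Fin n) (f : MvPowerSeries (Fin n) S) :
    swapVars i j (swapVars i j f) = f := by
  ext m
  rw [swapVars_coeff, swapVars_coeff, equivMapDomain_swap_invol]

theorem swapVars_sub {n : ℕ} (i j : Fin n) (f h : MvPowerSeries (Fin n) S) :
    swapVars i j (f - h) = swapVars i j f - swapVars i j h := rfl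

section Demazure

variable {n : ℕ} {i j : Fin n}

def updatePair (i j : Fin n) (m : Fin n →₀ ℕ) (a b : ℕ) : Fin n →₀ ℕ :=
  (m.update i a).update j b

theorem updatePair_self (hij : i ≠ j) (m : Fin n →₀ ℕ) : updatePair i j m (m i) (m j) = m := by
  ext k
  by_cases hkj : k = j <;> by_cases hki : k = i <;> simp_all [updatePair]

theorem equivMapDomain_swap_eq_updatePair (hij : i ≠ j) (m : Fin n →₀ ℕ) :
    equivMapDomain (Equiv.swap i j) m = updatePair i j m (m j) (m i) := by
  ext k
  by_cases hkj : k = j <;> by_cases hki : k = i <;>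
    simp_all [updatePair, update_apply, Equiv.swap_apply_of_ne_of_ne]

theorem updatePair_tsub_single_left (m : Fin n →₀ ℕ) (a b : ℕ) :
    updatePair i j (m - single i 1) a b = updatePair i j m a b := by
  ext k
  by_cases hkj : k = j <;> by_cases hki : k = i <;> simp_all [updatePair, update_apply]

theorem updatePair_tsub_single_right (m : Fin n →₀ ℕ) (a b : ℕ) :
    updatePair i j (m - single j 1) a b = updatePair i j m a b := by
  ext k
  by_cases hkj : k = j <;> by_cases hki : k = i <;> simp_all [updatePair, update_apply]

/-- If `G c d` is the coefficient of `x_i^c x_j^d` in `f`, this is the coefficient of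
`x_i^a x_j^b` in `(f - s_i f)/(x_i - x_j)`: for `c > d`, `(x_i^c x_j^d - x_i^d x_j^c)/(x_i - x_j)`
is `∑_{d ≤ q < c} x_i^(c+d-1-q) x_j^q`. -/
def demazureCoeff (G : ℕ → ℕ → S) (a b : ℕ) : S :=
  ∑ q ∈ Finset.range (min a b + 1), (G (a + b + 1 - q) q - G q (a + b + 1 - q))

theorem ite_demazureCoeff_sub_ite (G : ℕ → ℕ → S) (a b : ℕ) :
    (if 1 ≤ a then demazureCoeff G (a - 1) b else 0)
      - (if 1 ≤ b then demazureCoeff G a (b - 1) else 0) = G a b - G b a := by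
  set H : ℕ → S := fun q => G (a + b - q) q - G q (a + b - q)
  have hleft : (if 1 ≤ a then demazureCoeff G (a - 1) b else 0)
      = ∑ q ∈ Finset.range (min a (b + 1)), H q := by
    rcases Nat.eq_zero_or_pos a with rfl | ha
    · simp
    · rw [if_pos (show 1 ≤ a from ha), demazureCoeff,
        show min (a - 1) b + 1 = min a (b + 1) by omega, show a - 1 + b + 1 = a + b by omega]
  have hright : (if 1 ≤ b then demazureCoeff G a (b - 1) else 0)
      = ∑ q ∈ Finset.range (min (a + 1) b), H q := by
    rcases Nat.eq_zero_or_pos b with rfl | hb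
    · simp
    · rw [if_pos (show 1 ≤ b from hb), demazureCoeff,
        show min a (b - 1) + 1 = min (a + 1) b by omega, show a + (b - 1) + 1 = a + b by omega]
  rw [hleft, hright]
  rcases lt_trichotomy a b with hab | rfl | hab
  · rw [min_eq_left (by omega : a ≤ b + 1), min_eq_left (by omega : a + 1 ≤ b),
      Finset.sum_range_succ]
    simp [H]
  · simp
  · rw [min_eq_right (by omega : b + 1 ≤ a), min_eq_right (by omega : b ≤ a + 1),
      Finset.sum_range_succ]
    simp [H]

def demazure (i j : Fin n) (f : MvPowerSeries (Fin n) S) : MvPowerSeries (Fin n) S :=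
  fun m => demazureCoeff (fun a b => coeff (updatePair i j m a b) f) (m i) (m j)

theorem coeff_demazure (f : MvPowerSeries (Fin n) S) (m : Fin n →₀ ℕ) :
    coeff m (demazure i j f)
      = demazureCoeff (fun a b => coeff (updatePair i j m a b) f) (m i) (m j) :=
  rfl

theorem X_sub_X_mul_demazure (hij : i ≠ j) (f : MvPowerSeries (Fin n) S) :
    (X i - X j) * demazure i j f = f - swapVars i j f := by
  classical
  ext m
  have hm : coeff m f = coeff (updatePair i j m (m i) (m j)) f := by rw [updatePair_self hij]
  rw [sub_mul, map_sub, map_sub, X_def, X_def, coeff_monomial_mul, coeff_monomial_mul,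
    swapVars_coeff, equivMapDomain_swap_eq_updatePair hij, hm]
  simp only [one_mul, single_le_iff, coeff_demazure, updatePair_tsub_single_left,
    updatePair_tsub_single_right, tsub_apply, single_eq_same, single_eq_of_ne' hij,
    single_eq_of_ne' hij.symm, tsub_zero]
  exact ite_demazureCoeff_sub_ite _ _ _

theorem demazure_eq_of_X_sub_X_mul_eq (hij : i ≠ j) {f h : MvPowerSeries (Fin n) S}
    (hh : (X i - X j) * h = f - swapVars i j f) : demazure i j f = h :=
  MvPowerSeries.isLeftRegular_X_sub_X hij ((X_sub_X_mul_demazure hij f).trans hh.symm)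

theorem demazure_add (hij : i ≠ j) (f f' : MvPowerSeries (Fin n) S) :
    demazure i j (f + f') = demazure i j f + demazure i j f' :=
  demazure_eq_of_X_sub_X_mul_eq hij <| by
    rw [mul_add, X_sub_X_mul_demazure hij, X_sub_X_mul_demazure hij, swapVars_add]
    ring

theorem demazure_mul_of_swapVars_eq (hij : i ≠ j) {g : MvPowerSeries (Fin n) S}
    (hg : swapVars i j g = g) (f : MvPowerSeries (Fin n) S) :
    demazure i j (g * f) = g * demazure i j f :=
  demazure_eq_of_X_sub_X_mul_eq hij <| by
    rw [mul_left_comm, X_sub_X_mul_demazure hij, swapVars_mul, hg, mul_sub]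

theorem demazure_one (hij : i ≠ j) : demazure i j (1 : MvPowerSeries (Fin n) S) = 0 :=
  demazure_eq_of_X_sub_X_mul_eq hij <| by rw [swapVars_one, sub_self, mul_zero]

theorem demazure_X (hij : i ≠ j) : demazure i j (X i : MvPowerSeries (Fin n) S) = 1 :=
  demazure_eq_of_X_sub_X_mul_eq hij <| by rw [swapVars_X, Equiv.swap_apply_left, mul_one]

theorem swapVars_demazure (hij : i ≠ j) (f : MvPowerSeries (Fin n) S) :
    swapVars i j (demazure i j f) = demazure i j f := by
  have h := congrArg (swapVars i j) (X_sub_X_mul_demazure hij f)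
  rw [swapVars_mul, swapVars_sub, swapVars_sub, swapVars_X, swapVars_X, swapVars_swapVars,
    Equiv.swap_apply_left, Equiv.swap_apply_right] at h
  exact demazure_eq_of_X_sub_X_mul_eq hij (by linear_combination -h) |>.symm

def demazureLinearMap (hij : i ≠ j) :
    MvPowerSeries (Fin n) S →ₗ[fixedSubalgebra S i j] MvPowerSeries (Fin n) S where
  toFun := demazure i j
  map_add' := demazure_add hij
  map_smul' g f := demazure_mul_of_swapVars_eq hij g.2 f

theorem exists_eq_fixed_add_fixed_mul_X (hij : i ≠ j) (t : MvPowerSeries (Fin n) S) :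
    ∃ t₀ t₁ : fixedSubalgebra S i j, t = algebraMap _ _ t₀ + algebraMap _ _ t₁ * X i := by
  have ht₀ : swapVars i j (t - demazure i j t * X i) = t - demazure i j t * X i := by
    rw [swapVars_sub, swapVars_mul, swapVars_demazure hij, swapVars_X, Equiv.swap_apply_left]
    linear_combination X_sub_X_mul_demazure hij t
  exact ⟨⟨_, ht₀⟩, ⟨_, swapVars_demazure hij t⟩, (sub_add_cancel _ _).symm⟩

end Demazure

theorem constantCoeff_msubst {k n : ℕ} (a : Fin k → MvPowerSeries (Fin n) S)
    (F : MvPowerSeries (Fin k) S) : constantCoeff (msubst a F) = constantCoeff F := by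
  have h0 : (equivFunOnFinite.symm fun _ : Fin k => (0 : ℕ)) = ⊥ := by ext; rfl
  rw [← coeff_zero_eq_constantCoeff_apply, ← coeff_zero_eq_constantCoeff_apply, coeff_apply]
  simp only [msubst]
  rw [sum_zero_index, h0, Finset.Iic_bot, Finset.sum_singleton, bot_eq_zero]
  simp

theorem isUnit_gsub {g : MvPowerSeries (Fin 2) S} (hg : IsUnit g) {n : ℕ}
    (a b : MvPowerSeries (Fin n) S) : IsUnit (gsub g a b) := by
  rw [isUnit_iff_constantCoeff, gsub, constantCoeff_msubst]
  exact isUnit_iff_constantCoeff.mp hg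

theorem mulHom_tmul {n : ℕ} (i j : Fin n) (r t : MvPowerSeries (Fin n) S) :
    mulHom S i j (r ⊗ₜ t) = r * t :=
  rfl

theorem mulsHom_tmul {n : ℕ} (i j : Fin n) (r t : MvPowerSeries (Fin n) S) :
    mulsHom S i j (r ⊗ₜ t) = r * swapVars i j t :=
  rfl

theorem xi_sequences_short_exact_general
    (g : MvPowerSeries (Fin 2) S)
    (hgu : IsUnit g)
    {n : ℕ} (i j : Fin n) (hij : (i : ℕ) + 1 = (j : ℕ)) :
    (Function.Injective (fun r : MvPowerSeries (Fin n) S =>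
        (r ⊗ₜ[fixedSubalgebra S i j] (1 : MvPowerSeries (Fin n) S)) * xiElt g i j) ∧
      Function.Surjective (mulsHom S i j) ∧
      Set.range (fun r : MvPowerSeries (Fin n) S =>
          (r ⊗ₜ[fixedSubalgebra S i j] (1 : MvPowerSeries (Fin n) S)) * xiElt g i j)
        = {a : BSB S i j | mulsHom S i j a = 0}) ∧
    (Function.Injective (fun r : MvPowerSeries (Fin n) S =>
        (r ⊗ₜ[fixedSubalgebra S i j] (1 : MvPowerSeries (Fin n) S)) * xiElt' g i j) ∧
      Function.Surjective (mulHom S i j) ∧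
      Set.range (fun r : MvPowerSeries (Fin n) S =>
          (r ⊗ₜ[fixedSubalgebra S i j] (1 : MvPowerSeries (Fin n) S)) * xiElt' g i j)
        = {a : BSB S i j | mulHom S i j a = 0}) := by
  have hij' : i ≠ j := Fin.ne_of_val_ne (by omega)
  have hspan := exists_eq_fixed_add_fixed_mul_X (S := S) hij'
  have hd1 := demazure_one (S := S) hij'
  have hdx := demazure_X (S := S) hij'
  exact ⟨shortExact_tmul_one_mul_of_dual hspan (demazureLinearMap hij') hd1 hdx (mulsHom S i j)
      (fun r => (mulsHom_tmul i j r 1).trans (by rw [swapVars_one, mul_one]))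
      ((mulsHom_tmul i j 1 (X i)).trans (by rw [swapVars_X, Equiv.swap_apply_left, one_mul]))
      (isUnit_gsub hgu _ _).ringInverse,
    shortExact_tmul_one_mul_of_dual hspan (demazureLinearMap hij') hd1 hdx (mulHom S i j)
      (fun r => (mulHom_tmul i j r 1).trans (mul_one r))
      ((mulHom_tmul i j 1 (X i)).trans (one_mul _))
      (isUnit_gsub hgu _ _).ringInverse⟩

/-- the two sequences `0 → R → A → R → 0`, with first maps
`r ↦ (r ⊗ 1)·ξ` (resp. `r ↦ (r ⊗ 1)·ξ'`) and second maps `μ_s` (resp. `μ`),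
are short exact. -/
theorem xi_sequences_short_exact
    (F : MvPowerSeries (Fin 2) S) (hF : IsFormalGroupLaw F)
    (ι : MvPowerSeries (Fin 1) S) (hι : IsFormalInverse F ι)
    (g : MvPowerSeries (Fin 2) S)
    (hg : (X 0 : MvPowerSeries (Fin 2) S) - X 1 = fsub F ι (X 0) (X 1) * g)
    (hgu : IsUnit g)
    {n : ℕ} (i j : Fin n) (hij : (i : ℕ) + 1 = (j : ℕ)) :
    (Function.Injective (fun r : MvPowerSeries (Fin n) S =>
        (r ⊗ₜ[fixedSubalgebra S i j] (1 : MvPowerSeries (Fin n) S)) * xiElt g i j) ∧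
      Function.Surjective (mulsHom S i j) ∧
      Set.range (fun r : MvPowerSeries (Fin n) S =>
          (r ⊗ₜ[fixedSubalgebra S i j] (1 : MvPowerSeries (Fin n) S)) * xiElt g i j)
        = {a : BSB S i j | mulsHom S i j a = 0}) ∧
    (Function.Injective (fun r : MvPowerSeries (Fin n) S =>
        (r ⊗ₜ[fixedSubalgebra S i j] (1 : MvPowerSeries (Fin n) S)) * xiElt' g i j) ∧
      Function.Surjective (mulHom S i j) ∧
      Set.range (fun r : MvPowerSeries (Fin n) S =>
          (r ⊗ₜ[fixedSubalgebra S i j] (1 : MvPowerSeries (Fin n) S)) * xiElt' g i j)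
        = {a : BSB S i j | mulHom S i j a = 0}) :=
  xi_sequences_short_exact_general g hgu i j hij
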